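/- Let a, b, c ∈ ℂ with c ≠ 0, and let f ∈ ℂ[x,y] be a nonzero polynomial satisfying (x+by)·f(x+y, z) − (x+ay+z)·f(x,z) = (cy−z)·f(x, y+z) for all x, y, z ∈ ℂ. Then a − b + c ∈ {0, 1, 2, 3}. -/

import Mathlib

open Polynomial

noncomputable def ev2 (f : MvPolynomial (Fin 2) ℂ) (x y : ℂ) : ℂ :=
  MvPolynomial.eval ![x, y] f

/-! Setting `z = 0` expresses `c y f(x, y)` through `p(x) = f(x, 0)`, and comparing the
coefficients of `y` then gives `x p' = (a - b + c) p`. Hence `p` is a monomial `α xᵈ` with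
`d = a - b + c`, and `f` is determined by it. Substituting back, the equation restricted to the
line `(0, 1, t)` (when `b ≠ 0`) or `(1, t, -1)` (when `b = 0`) becomes a polynomial identity
in `t` whose coefficients of `t²` and `t³` are incompatible unless `d ≤ 3`. -/

def KeyFunctionalEq (a b c : ℂ) (F : ℂ → ℂ → ℂ) : Prop :=
  ∀ x y z, (x + b * y) * F (x + y) z - (x + a * y + z) * F x z = (c * y - z) * F x (y + z)

theorem eval_aeval_eq_ev2 (f : MvPolynomial (Fin 2) ℂ) (g₀ g₁ : ℂ[X]) (t : ℂ) :
    (MvPolynomial.aeval ![g₀, g₁] f).eval t = ev2 f (g₀.eval t) (g₁.eval t) := by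
  have hvec : (fun i => aeval t (![g₀, g₁] i)) = ![aeval t g₀, aeval t g₁] := by
    ext i; fin_cases i <;> rfl
  rw [← coe_aeval_eq_eval, MvPolynomial.comp_aeval_apply, hvec]
  rfl

theorem eq_zero_of_forall_ev2_eq_zero_of_ne_zero {f : MvPolynomial (Fin 2) ℂ}
    (hf : ∀ u v, v ≠ 0 → ev2 f u v = 0) : f = 0 := by
  have hXf : MvPolynomial.X 1 * f = 0 := MvPolynomial.funext fun x => by
    have hx : x = ![x 0, x 1] := by ext i; fin_cases i <;> rfl
    rcases eq_or_ne (x 1) 0 with h0 | h0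
    · simp [h0]
    · rw [hx, map_mul, map_zero, MvPolynomial.eval_X]
      exact mul_eq_zero_of_right _ (hf _ _ h0)
  simpa [MvPolynomial.X_ne_zero] using hXf

theorem eq_natDegree_and_eq_C_mul_X_pow_of_X_mul_derivative_eq {R : Type*} [CommRing R]
    [IsDomain R] [CharZero R] {p : R[X]} {μ : R}
    (h : X * derivative p = C μ * p) (hp : p ≠ 0) :
    μ = p.natDegree ∧ p = C p.leadingCoeff * X ^ p.natDegree := by
  have hcoeff : ∀ k : ℕ, (k - μ) * p.coeff k = 0 := by
    intro k
    have := congrArg (coeff · k) h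
    cases k with
    | zero => simpa using this.symm
    | succ k =>
      simp only [coeff_X_mul, coeff_derivative, coeff_C_mul] at this
      push_cast
      linear_combination this
  have hμ : μ = p.natDegree := by
    have := hcoeff p.natDegree
    rw [← leadingCoeff, mul_eq_zero, sub_eq_zero] at this
    exact (this.resolve_right (leadingCoeff_ne_zero.mpr hp)).symm
  refine ⟨hμ, Polynomial.ext fun k => ?_⟩
  rw [coeff_C_mul_X_pow]
  split_ifs with hk
  · rw [hk, leadingCoeff]
  · have := hcoeff k
    rw [hμ, mul_eq_zero, sub_eq_zero, Nat.cast_inj] at this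
    exact this.resolve_left hk

theorem X_mul_derivative_eq_of_mul_ev2_eq {a b c : ℂ} {f : MvPolynomial (Fin 2) ℂ} {p : ℂ[X]}
    (hp : ∀ u, p.eval u = ev2 f u 0)
    (hR : ∀ u v, c * v * ev2 f u v = (u + b * v) * p.eval (u + v) - (u + a * v) * p.eval u) :
    X * derivative p = C (a - b + c) * p := by
  refine Polynomial.funext fun u => ?_
  set fu := MvPolynomial.aeval ![C u, X] f
  have hfu : ∀ v, fu.eval v = ev2 f u v := fun v => by simp [fu, eval_aeval_eq_ev2]
  have hpoly : C c * (X * fu) =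
      C u * taylor u p + C b * (X * taylor u p) - C (u * p.eval u) - C (a * p.eval u) * X :=
    Polynomial.funext fun v => by
      simp only [eval_mul, eval_sub, eval_add, eval_C, eval_X, hfu, taylor_eval, add_comm v]
      linear_combination hR u v
  have hcoeff₁ := congrArg (coeff · 1) hpoly
  simp only [coeff_add, coeff_sub, coeff_C_mul, coeff_X_mul, coeff_C, coeff_X_one, one_ne_zero,
    if_false, taylor_coeff_one, coeff_zero_eq_eval_zero, taylor_eval, zero_add, hfu, ← hp]
    at hcoeff₁
  simp only [eval_mul, eval_X, eval_C]
  linear_combination -hcoeff₁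

theorem coeff_quadratic_mul_one_add_X_pow {R : Type*} [CommSemiring R] (e₀ e₁ e₂ : R)
    (n k : ℕ) :
    ((C e₀ + C e₁ * X + C e₂ * X ^ 2) * (1 + X) ^ n).coeff (k + 2) =
      e₀ * n.choose (k + 2) + e₁ * n.choose (k + 1) + e₂ * n.choose k := by
  simp only [add_mul, mul_assoc, coeff_add, coeff_C_mul, coeff_X_mul, coeff_X_pow_mul',
    coeff_one_add_X_pow, le_add_iff_nonneg_left, zero_le, ↓reduceIte, add_tsub_cancel_right]

theorem cast_choose_three {K : Type*} [Field K] [CharZero K] (n : ℕ) :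
    (n.choose 3 : K) = n * (n - 1) * (n - 2) / 6 := by
  induction n with
  | zero => simp
  | succ n ih => rw [Nat.choose_succ_succ', Nat.cast_add, ih, Nat.cast_choose_two]; push_cast; ring

section

variable {a b c α : ℂ} {d : ℕ} {F : ℂ → ℂ → ℂ}

-- The equation at `(0, 1, t)` times `c t (1 + t)`, with `F` eliminated through `hR`.
theorem slice_zero_one_eq_zero (hF : KeyFunctionalEq a b c F)
    (hR : ∀ u v, c * v * F u v = α * ((u + b * v) * (u + v) ^ d - (u + a * v) * u ^ d))
    (hb : b ≠ 0) (hα : α ≠ 0) (hd : d ≠ 0) :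
    (C 1 + C (b - c) * X + C 1 * X ^ 2) * (1 + X) ^ (d + 1) - (C 1 + C (1 + a) * X + C a * X ^ 2)
      - X ^ (d + 1) * ((1 + X) * (C a + X)) = 0 := by
  refine Polynomial.funext fun t => ?_
  have e := hF 0 1 t
  have r₁ := hR 1 t
  have r₂ := hR 0 t
  have r₃ := hR 0 (1 + t)
  simp only [zero_add, mul_one, one_pow, zero_pow hd, mul_zero, sub_zero] at e r₁ r₂ r₃
  have key : b * α * ((1 + (b - c) * t + t ^ 2) * (1 + t) ^ (d + 1) - (1 + (1 + a) * t + a * t ^ 2)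
      - t ^ (d + 1) * ((1 + t) * (a + t))) = 0 := by
    linear_combination
      c * t * (1 + t) * e - b * (1 + t) * r₁ + (a + t) * (1 + t) * r₂ + t * (c - t) * r₃
  simp only [eval_sub, eval_add, eval_mul, eval_pow, eval_C, eval_X, eval_one, eval_zero]
  linear_combination (mul_eq_zero.mp key).resolve_left (mul_ne_zero hb hα)

-- The equation at `(1, t, -1)` times `c (1 - t)`, with `F` eliminated through `hR`.
theorem slice_one_neg_one_eq_zero (hF : KeyFunctionalEq a b c F)
    (hR : ∀ u v, c * v * F u v = α * ((u + b * v) * (u + v) ^ d - (u + a * v) * u ^ d))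
    (hb : b = 0) (hα : α ≠ 0) (hd : d ≠ 0) :
    (C (1 - a) + C a * X + C (-1) * X ^ 2) * (1 + X) ^ d
      + X ^ d * ((X - 1) * (1 + X) + (C c * X + 1))
      + (C (a - 1) - C (a * (1 - a) + c * (1 - a) + a) * X + C (a * (1 - a) - c * a) * X ^ 2)
      = 0 := by
  subst hb
  refine Polynomial.funext fun t => ?_
  have e := hF 1 t (-1)
  have r₁ := hR (1 + t) (-1)
  have r₂ := hR 1 (-1)
  have r₃ := hR 1 (t + -1)
  simp only [zero_mul, add_zero, one_pow, add_neg_cancel, zero_pow hd, mul_zero, zero_sub]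
    at e r₁ r₂ r₃
  have key : α * ((1 - a + a * t - t ^ 2) * (1 + t) ^ d + t ^ d * ((t - 1) * (1 + t) + (c * t + 1))
      + (a - 1 - (a * (1 - a) + c * (1 - a) + a) * t + (a * (1 - a) - c * a) * t ^ 2)) = 0 := by
    linear_combination
      -(t - 1) * r₁ + a * t * (t - 1) * r₂ - (c * t + 1) * r₃ - c * (t - 1) * e
  simp only [eval_sub, eval_add, eval_mul, eval_pow, eval_C, eval_X, eval_one, eval_zero]
  linear_combination (mul_eq_zero.mp key).resolve_left hα

theorem exponent_le_three (hF : KeyFunctionalEq a b c F)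
    (hR : ∀ u v, c * v * F u v = α * ((u + b * v) * (u + v) ^ d - (u + a * v) * u ^ d))
    (hα : α ≠ 0) (hdeg : a - b + c = d) : d ≤ 3 := by
  by_contra! hd
  obtain ⟨n, rfl⟩ : ∃ n, d = n + 4 := ⟨d - 4, by omega⟩
  rcases eq_or_ne b 0 with hb | hb
  · have hP := slice_one_neg_one_eq_zero hF hR hb hα (by omega)
    have h₂ := congrArg (coeff · (0 + 2)) hP
    have h₃ := congrArg (coeff · (1 + 2)) hP
    simp only [coeff_sub, coeff_add, coeff_quadratic_mul_one_add_X_pow, coeff_X_pow_mul', coeff_C,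
      coeff_C_mul, coeff_X_pow, coeff_X, Nat.reduceAdd, Nat.reduceLeDiff, if_false] at h₂ h₃
    norm_num [hb, Nat.cast_choose_two, cast_choose_three] at h₂ h₃ hdeg
    have : ((n : ℂ) + 4) * (n + 1) * (n + 2) * (n + 5) = 0 := by
      linear_combination 2 * (n + 2) * (n + 5) * h₃
        - 4 * ((n + 4) * (n + 3) * (n + 2) / 6 - (n + 4) * (n + 3) / 2) * (h₂ + a * hdeg)
    exact absurd (by exact_mod_cast this : (n + 4) * (n + 1) * (n + 2) * (n + 5) = 0)
      (by positivity)
  · have hP := slice_zero_one_eq_zero hF hR hb hα (by omega)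
    have h₂ := congrArg (coeff · (0 + 2)) hP
    have h₃ := congrArg (coeff · (1 + 2)) hP
    simp only [coeff_sub, coeff_add, coeff_quadratic_mul_one_add_X_pow, coeff_X_pow_mul', coeff_C,
      coeff_C_mul, coeff_X_pow, coeff_X, Nat.reduceAdd, Nat.reduceLeDiff, if_false] at h₂ h₃
    norm_num [Nat.cast_choose_two, cast_choose_three] at h₂ h₃ hdeg
    have : ((n : ℂ) + 5) * (n + 1) * (n + 6) = 0 := by
      linear_combination -12 * h₃ + 6 * (n + 5) * (h₂ + hdeg)
    exact absurd (by exact_mod_cast this : (n + 5) * (n + 1) * (n + 6) = 0) (by positivity)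

end

theorem exists_mul_ev2_eq_monomial {a b c : ℂ} (hc : c ≠ 0) {f : MvPolynomial (Fin 2) ℂ}
    (hf : f ≠ 0) (h : KeyFunctionalEq a b c (ev2 f)) :
    ∃ α ≠ 0, ∃ d : ℕ, a - b + c = d ∧
      ∀ u v, c * v * ev2 f u v = α * ((u + b * v) * (u + v) ^ d - (u + a * v) * u ^ d) := by
  set p : ℂ[X] := MvPolynomial.aeval ![X, 0] f
  have hp : ∀ u, p.eval u = ev2 f u 0 := fun u => by simp [p, eval_aeval_eq_ev2]
  have hR : ∀ u v, c * v * ev2 f u v = (u + b * v) * p.eval (u + v) - (u + a * v) * p.eval u := by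
    intro u v
    have := h u v 0
    simp only [add_zero, sub_zero, ← hp] at this
    linear_combination -this
  have hp0 : p ≠ 0 := by
    rintro hzero
    refine hf (eq_zero_of_forall_ev2_eq_zero_of_ne_zero fun u v hv => ?_)
    have := hR u v
    simp only [hzero, eval_zero, mul_zero, sub_zero] at this
    exact (mul_eq_zero.mp this).resolve_left (mul_ne_zero hc hv)
  obtain ⟨hdeg, hmono⟩ := eq_natDegree_and_eq_C_mul_X_pow_of_X_mul_derivative_eq
    (X_mul_derivative_eq_of_mul_ev2_eq hp hR) hp0
  have hα := leadingCoeff_ne_zero.mpr hp0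
  set α := p.leadingCoeff
  set d := p.natDegree
  refine ⟨α, hα, d, hdeg, fun u v => ?_⟩
  rw [hR, hmono]
  simp only [eval_mul, eval_C, eval_pow, eval_X]
  ring

theorem stmt18 (a b c : ℂ) (hc : c ≠ 0) (f : MvPolynomial (Fin 2) ℂ) (hf : f ≠ 0)
    (h : ∀ x y z : ℂ, (x + b * y) * ev2 f (x + y) z - (x + a * y + z) * ev2 f x z
      = (c * y - z) * ev2 f x (y + z)) :
    a - b + c ∈ ({0, 1, 2, 3} : Set ℂ) := by
  obtain ⟨α, hα, d, hdeg, hR⟩ := exists_mul_ev2_eq_monomial hc hf h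
  have hd : d ≤ 3 := exponent_le_three h hR hα hdeg
  rw [hdeg]
  interval_cases d <;> simp
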